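/- The Kempe ideal K_G = J_G + M_G equals ⟨[I_G]₂⟩ + M_G. -/

import Mathlib

open MvPolynomial

section KempePrelim

variable {V : Type} 

/-- A proper `k`-coloring. -/
def IsColoring (G : SimpleGraph V) (k : ℕ) (f : V → Fin k) : Prop :=
  ∀ ⦃u v : V⦄, G.Adj u v → f u ≠ f v

/-- `g` is obtained from `f` by a Kempe switching: swap colors `i` and `j` on
one connected component of the subgraph induced on `f⁻¹(i) ∪ f⁻¹(j)`. -/
def KempeSwitch (G : SimpleGraph V) {k : ℕ} (f g : V → Fin k) : Prop :=
  ∃ i j : Fin k, ∃ C : Set V,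
    (∃ comp : (G.induce {v | f v = i ∨ f v = j}).ConnectedComponent,
      C = Subtype.val '' comp.supp) ∧
    (∀ v ∈ C, (f v = i → g v = j) ∧ (f v = j → g v = i)) ∧
    (∀ v ∉ C, g v = f v)

/-- A single step of Kempe equivalence between proper `k`-colorings. -/
def KempeStep (G : SimpleGraph V) {k : ℕ} (f g : V → Fin k) : Prop :=
  IsColoring G k f ∧ IsColoring G k g ∧ KempeSwitch G f g

/-- Kempe equivalence of `k`-colorings. -/
def KempeEquiv (G : SimpleGraph V) {k : ℕ} (f g : V → Fin k) : Prop :=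
  Relation.ReflTransGen (KempeStep G) f g

/-- The type of proper `k`-colorings of `G`. -/
def ProperColoring (G : SimpleGraph V) (k : ℕ) : Type _ :=
  {f : V → Fin k // IsColoring G k f}

/-- The number of Kempe classes of `k`-colorings of `G`. -/
noncomputable def Kc (G : SimpleGraph V) (k : ℕ) : ℕ :=
  Nat.card (Quot (fun f g : ProperColoring G k => KempeEquiv G f.1 g.1))

/-- The stable (independent) sets of `G`, as a type indexing variables. -/
def StableSet (G : SimpleGraph V) : Type _ :=
  {s : Finset V // ∀ ⦃i⦄, i ∈ s → ∀ ⦃j⦄, j ∈ s → ¬ G.Adj i j}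

def emptyStable (G : SimpleGraph V) : StableSet G :=
  ⟨∅, by intro i hi; simp at hi⟩

def singleStable (G : SimpleGraph V) (i : V) : StableSet G :=
  ⟨{i}, by
    intro a ha b hb
    simp only [Finset.mem_singleton] at ha hb
    rw [ha, hb]
    exact G.irrefl⟩

def eraseStable (G : SimpleGraph V) [DecidableEq V] (S : StableSet G) (i : V) : StableSet G :=
  ⟨S.1.erase i, fun _ ha _ hb => S.2 (Finset.mem_of_mem_erase ha) (Finset.mem_of_mem_erase hb)⟩

variable (K : Type) [Field K]

/-- The monoid algebra map `x_S ↦ t^{ρ(S)} s`, into `K[t₁,…,t_d,s]`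
(realized as `MvPolynomial (Option V) K`, with `none` playing the role of `s`). -/
noncomputable def piMap (G : SimpleGraph V) :
    MvPolynomial (StableSet G) K →ₐ[K] MvPolynomial (Option V) K :=
  aeval fun S : StableSet G => (∏ i ∈ S.1, X (some i)) * X (none : Option V)

/-- The toric ideal `I_G` of the stable set ring. -/
noncomputable def toricIdeal (G : SimpleGraph V) : Ideal (MvPolynomial (StableSet G) K) :=
  RingHom.ker (piMap K G).toRingHom

/-- The ideal `L_G`. -/
noncomputable def idealL (G : SimpleGraph V) [DecidableEq V] :
    Ideal (MvPolynomial (StableSet G) K) :=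
  Ideal.span {p | ∃ (S : StableSet G) (i : V), i ∈ S.1 ∧ 2 ≤ S.1.card ∧
    p = X (eraseStable G S i) * X (singleStable G i) - X S * X (emptyStable G)}

/-- The 2-coloring ideal `J_G`. -/
noncomputable def idealJ (G : SimpleGraph V) [DecidableEq V] :
    Ideal (MvPolynomial (StableSet G) K) :=
  Ideal.span {p | ∃ S₁ S₂ S₃ S₄ : StableSet G,
    Disjoint S₁.1 S₂.1 ∧ Disjoint S₃.1 S₄.1 ∧ S₁.1 ∪ S₂.1 = S₃.1 ∪ S₄.1 ∧
    p = X S₁ * X S₂ - X S₃ * X S₄}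

/-- The ideal `⟨[I_G]₂⟩` generated by all quadratic binomials of `I_G`. -/
noncomputable def quadPart (G : SimpleGraph V) : Ideal (MvPolynomial (StableSet G) K) :=
  Ideal.span {p | (∃ S₁ S₂ S₃ S₄ : StableSet G, p = X S₁ * X S₂ - X S₃ * X S₄) ∧
    p ∈ toricIdeal K G}

/-- The monomial ideal `M_G`. -/
noncomputable def idealM (G : SimpleGraph V) [DecidableEq V] :
    Ideal (MvPolynomial (StableSet G) K) :=
  Ideal.span {p | ∃ S T : StableSet G, (S.1 ∩ T.1).Nonempty ∧ p = X S * X T}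

/-- The Kempe ideal `K_G = J_G + M_G`. -/
noncomputable def kempeIdeal (G : SimpleGraph V) [DecidableEq V] :
    Ideal (MvPolynomial (StableSet G) K) :=
  idealJ K G + idealM K G

/-- The color class of a proper coloring, as a stable set. -/
def colorClass (G : SimpleGraph V) [Fintype V] [DecidableEq V] {k : ℕ}
    (f : V → Fin k) (hf : IsColoring G k f) (c : Fin k) : StableSet G :=
  ⟨Finset.univ.filter (fun v => f v = c), by
    intro a ha b hb hadj
    simp only [Finset.mem_filter] at ha hb
    exact hf hadj (ha.2.trans hb.2.symm)⟩

/-- The monomial `x_f` associated with a proper `k`-coloring `f`. -/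
noncomputable def xMonomial (G : SimpleGraph V) [Fintype V] [DecidableEq V] {k : ℕ}
    (f : V → Fin k) (hf : IsColoring G k f) : MvPolynomial (StableSet G) K :=
  ∏ c : Fin k, X (colorClass G f hf c)

/-- The Hilbert function `k ↦ dim_K (R/I)_k` of a quotient of `R[G]`. -/
noncomputable def hilbertFn (G : SimpleGraph V)
    (I : Ideal (MvPolynomial (StableSet G) K)) (k : ℕ) : ℕ :=
  Module.finrank K (Submodule.map (Ideal.Quotient.mkₐ K I).toLinearMap
    (homogeneousSubmodule (StableSet G) K k))

end KempePrelim

/-!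
A quadratic binomial `x_{S₁}x_{S₂} - x_{S₃}x_{S₄}` lies in `I_G` exactly when
`S₁ ⊎ S₂ = S₃ ⊎ S₄` as multisets. That multiset determines both the union `S₁ ∪ S₂` and
whether `S₁, S₂` are disjoint (it is then duplicate-free). So such a binomial is either a
generator of `J_G` or a difference of two generators of `M_G`; conversely the generators
of `J_G` are quadratic binomials of `I_G`.
-/

theorem MvPolynomial.prod_map_X_eq_monomial {σ R : Type*} [CommSemiring R] [DecidableEq σ]
    (m : Multiset σ) :
    ((m.map X).prod : MvPolynomial σ R) = monomial (Multiset.toFinsupp m) 1 := by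
  induction m using Multiset.induction_on with
  | empty => simp
  | cons a m ih =>
    rw [Multiset.map_cons, Multiset.prod_cons, ih, ← Multiset.singleton_add, map_add,
      Multiset.toFinsupp_singleton, X, monomial_mul, one_mul]

theorem MvPolynomial.prod_map_X_injective {σ R : Type*} [CommSemiring R] [Nontrivial R] :
    Function.Injective fun m : Multiset σ => ((m.map X).prod : MvPolynomial σ R) := by
  classical
  intro m m' h
  simp only [prod_map_X_eq_monomial] at h
  exact Multiset.toFinsupp.injective (monomial_left_injective one_ne_zero h)

theorem Finset.val_add_val_of_disjoint {α : Type*} [DecidableEq α] {s t : Finset α}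
    (h : Disjoint s t) : s.val + t.val = (s ∪ t).val := by
  rw [← Finset.disjUnion_eq_union s t h, Finset.disjUnion_val]

theorem Finset.union_eq_of_val_add_eq {α : Type*} [DecidableEq α] {s t u v : Finset α}
    (h : s.val + t.val = u.val + v.val) : s ∪ t = u ∪ v := by
  simpa only [Multiset.toFinset_add, Finset.val_toFinset] using congrArg Multiset.toFinset h

theorem Finset.disjoint_iff_of_val_add_eq {α : Type*} {s t u v : Finset α}
    (h : s.val + t.val = u.val + v.val) : Disjoint s t ↔ Disjoint u v := by
  have key : ∀ a b : Finset α, Disjoint a b ↔ (a.val + b.val).Nodup := fun a b => by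
    simp [Multiset.nodup_add, a.nodup, b.nodup, Finset.disjoint_val]
  rw [key, key, h]

section StableSetRing

variable {V : Type} (K : Type) [Field K] (G : SimpleGraph V)

theorem piMap_X (S : StableSet G) :
    piMap K G (X S) = ((none ::ₘ S.1.val.map some).map X).prod := by
  rw [piMap, aeval_X, Finset.prod_eq_multiset_prod, Multiset.map_cons, Multiset.prod_cons,
    Multiset.map_map, mul_comm]
  rfl

theorem sub_mem_toricIdeal_iff (S₁ S₂ S₃ S₄ : StableSet G) :
    X S₁ * X S₂ - X S₃ * X S₄ ∈ toricIdeal K G ↔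
      S₁.1.val + S₂.1.val = S₃.1.val + S₄.1.val := by
  rw [toricIdeal, RingHom.mem_ker, AlgHom.toRingHom_eq_coe, RingHom.coe_coe, map_sub,
    sub_eq_zero, map_mul, map_mul, piMap_X, piMap_X, piMap_X, piMap_X, ← Multiset.prod_add,
    ← Multiset.prod_add, ← Multiset.map_add, ← Multiset.map_add,
    (prod_map_X_injective (R := K)).eq_iff]
  simp only [Multiset.cons_add, Multiset.add_cons, Multiset.cons_inj_right, ← Multiset.map_add]
  exact (Multiset.map_injective (Option.some_injective V)).eq_iff

variable [DecidableEq V]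

theorem X_mul_X_mem_idealM {S T : StableSet G} (h : ¬Disjoint S.1 T.1) :
    X S * X T ∈ idealM K G :=
  Ideal.subset_span ⟨S, T, Finset.not_disjoint_iff_nonempty_inter.mp h, rfl⟩

theorem idealJ_le_quadPart : idealJ K G ≤ quadPart K G := by
  refine Ideal.span_mono ?_
  rintro p ⟨S₁, S₂, S₃, S₄, h₁₂, h₃₄, hunion, rfl⟩
  refine ⟨⟨S₁, S₂, S₃, S₄, rfl⟩, (sub_mem_toricIdeal_iff K G _ _ _ _).mpr ?_⟩
  rw [Finset.val_add_val_of_disjoint h₁₂, Finset.val_add_val_of_disjoint h₃₄, hunion]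

theorem quadPart_le_kempeIdeal : quadPart K G ≤ kempeIdeal K G := by
  refine Ideal.span_le.mpr ?_
  rintro p ⟨⟨S₁, S₂, S₃, S₄, rfl⟩, hp⟩
  have hval := (sub_mem_toricIdeal_iff K G _ _ _ _).mp hp
  have hdisj := Finset.disjoint_iff_of_val_add_eq hval
  by_cases h₁₂ : Disjoint S₁.1 S₂.1
  · exact Ideal.mem_sup_left <| Ideal.subset_span
      ⟨S₁, S₂, S₃, S₄, h₁₂, hdisj.mp h₁₂, Finset.union_eq_of_val_add_eq hval, rfl⟩
  · exact Ideal.mem_sup_right <| sub_mem (X_mul_X_mem_idealM K G h₁₂)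
      (X_mul_X_mem_idealM K G (hdisj.not.mp h₁₂))

end StableSetRing

theorem kempeIdeal_eq_quadPart_add_idealM {d : ℕ} (G : SimpleGraph (Fin d))
    (K : Type) [Field K] :
    kempeIdeal K G = quadPart K G + idealM K G :=
  le_antisymm (sup_le_sup_right (idealJ_le_quadPart K G) _)
    (sup_le (quadPart_le_kempeIdeal K G) le_sup_right)
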